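/- arXiv:2508.13020 — 4 statements merged into one kernel-verified Lean document; each statement's English description precedes it below -/
import Mathlib

section
/- The tree-cost function on e-graphs, defined as the least fixed point T(c) = min over e-nodes v in class c of (node_cost(v) + Σ_{k ∈ children(v)} T(k)), satisfies T(c) ≤ cost of every term (expression tree) rooted at class c, and equals the minimum tree cost over all terms extractable from class c, provided the e-graph admits at least one finite term from each class. -/
/-- `HasTermCost cl nodeCost children c n` means there is a term (finite expression tree)
extractable from e-class `c` whose tree cost is `n`: one chooses an e-node `v` of class `c`
and, recursively, terms from each child class of `v`; the tree cost is `node_cost v` plus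
the sum of the tree costs of the chosen subterms. -/
inductive HasTermCost {V C : Type*} (cl : V → C) (nodeCost : V → ℕ)
    (children : V → List C) : C → ℕ → Prop
  | mk (v : V) (costs : List ℕ)
      (h : List.Forall₂ (HasTermCost cl nodeCost children) (children v) costs) :
      HasTermCost cl nodeCost children (cl v) (nodeCost v + costs.sum)

/-!
Every post-fixed point `T ≤ F T` of the tree-cost operator `F` is a lower bound for term costs, by
induction on terms. Conversely, from every pre-fixed point `F T ≤ T` one extracts, by strong
induction on the finite value `T c`, a term of cost at most `T c`: pick an e-node attaining the
minimum and recurse into its children, which have strictly smaller `T`-values because node costs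
are positive. A fixed point is both, and a term in each class makes every `T c` finite.
-/

theorem List.exists_forall₂_of_forall_mem {α β : Type*} {R : α → β → Prop} :
    ∀ {l : List α}, (∀ a ∈ l, ∃ b, R a b) → ∃ l' : List β, Forall₂ R l l'
  | [], _ => ⟨[], .nil⟩
  | a :: l, h => by
    obtain ⟨b, hb⟩ := h a mem_cons_self
    obtain ⟨l', hl'⟩ := exists_forall₂_of_forall_mem fun x hx => h x (mem_cons_of_mem a hx)
    exact ⟨b :: l', .cons hb hl'⟩

theorem List.Forall₂.sum_map_le_sum_map {α β M : Type*} [AddMonoid M] [Preorder M]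
    [AddLeftMono M] [AddRightMono M] {R : α → β → Prop} {f : α → M} {g : β → M}
    {l₁ : List α} {l₂ : List β} (h : Forall₂ R l₁ l₂) (hfg : ∀ a b, R a b → f a ≤ g b) :
    (l₁.map f).sum ≤ (l₂.map g).sum :=
  Forall₂.sum_le_sum <| forall₂_map_left_iff.2 <| forall₂_map_right_iff.2 <| h.imp hfg

section TreeCost

variable {V C : Type*} [Fintype V] [DecidableEq C]
  {cl : V → C} {nodeCost : V → ℕ} {children : V → List C} {T : C → ℕ∞}

variable (cl nodeCost children) in
noncomputable def treeCostStep (S : C → ℕ∞) (c : C) : ℕ∞ :=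
  (Finset.univ.filter (fun v => cl v = c)).inf
    fun v => (nodeCost v : ℕ∞) + ((children v).map S).sum

theorem treeCostStep_le (S : C → ℕ∞) (v : V) :
    treeCostStep cl nodeCost children S (cl v) ≤ nodeCost v + ((children v).map S).sum :=
  Finset.inf_le (by simp)

theorem exists_of_treeCostStep_le {S : C → ℕ∞} {c : C} {n : ℕ}
    (h : treeCostStep cl nodeCost children S c ≤ n) :
    ∃ v, cl v = c ∧ (nodeCost v : ℕ∞) + ((children v).map S).sum ≤ n := by
  obtain ⟨v, hv, hle⟩ := (Finset.inf_le_iff (ENat.natCast_lt_top n)).1 h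
  exact ⟨v, (Finset.mem_filter.1 hv).2, hle⟩

theorem HasTermCost.le_of_le_treeCostStep (hT : ∀ c, T c ≤ treeCostStep cl nodeCost children T c)
    {c : C} {n : ℕ} (h : HasTermCost cl nodeCost children c n) : T c ≤ n :=
  HasTermCost.rec (motive_1 := fun c n _ => T c ≤ n)
    (motive_2 := fun l costs _ => (l.map T).sum ≤ (costs.sum : ℕ∞))
    (fun v costs _ hsum => calc
      T (cl v) ≤ nodeCost v + ((children v).map T).sum := (hT _).trans (treeCostStep_le T v)
      _ ≤ nodeCost v + (costs.sum : ℕ∞) := by gcongr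
      _ = ↑(nodeCost v + costs.sum) := by push_cast; rfl)
    (by simp)
    (fun _ _ hhead htail => by
      simpa only [List.map_cons, List.sum_cons, Nat.cast_add] using add_le_add hhead htail)
    h

theorem exists_hasTermCost_le_of_treeCostStep_le (hpos : ∀ v, 0 < nodeCost v)
    (hT : ∀ c, treeCostStep cl nodeCost children T c ≤ T c) {c : C} (hc : T c ≠ ⊤) :
    ∃ m, HasTermCost cl nodeCost children c m ∧ (m : ℕ∞) ≤ T c := by
  suffices ∀ n : ℕ, ∀ c, T c = n → ∃ m ≤ n, HasTermCost cl nodeCost children c m by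
    obtain ⟨n, hn⟩ := ENat.ne_top_iff_exists.1 hc
    obtain ⟨m, hmn, hm⟩ := this n c hn.symm
    exact ⟨m, hm, hn ▸ Nat.cast_le.2 hmn⟩
  intro n
  induction n using Nat.strong_induction_on with
  | _ n ih =>
  intro c hc
  obtain ⟨v, rfl, hv⟩ := exists_of_treeCostStep_le ((hT c).trans hc.le)
  have hchild : ∀ k ∈ children v, ∃ m, HasTermCost cl nodeCost children k m ∧ (m : ℕ∞) ≤ T k := by
    intro k hk
    have hk_le : T k ≤ ((children v).map T).sum :=
      List.single_le_sum (fun _ _ => zero_le) _ (List.mem_map_of_mem hk)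
    have hk : nodeCost v + T k ≤ n := (add_le_add_right hk_le _).trans hv
    have hk_ne_top : T k ≠ ⊤ := ne_top_of_le_ne_top (ENat.natCast_ne_top n) (le_add_self.trans hk)
    have hk_lt : T k < n := (ENat.lt_add_left hk_ne_top (by exact_mod_cast hpos v)).trans_le hk
    obtain ⟨t, ht⟩ := ENat.ne_top_iff_exists.1 hk_ne_top
    obtain ⟨m, hmt, hm⟩ := ih t (by exact_mod_cast ht ▸ hk_lt) k ht.symm
    exact ⟨m, hm, ht ▸ Nat.cast_le.2 hmt⟩
  obtain ⟨costs, hcosts⟩ := List.exists_forall₂_of_forall_mem hchild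
  refine ⟨_, ?_, .mk v costs (hcosts.imp fun _ _ => And.left)⟩
  have : (costs.sum : ℕ∞) ≤ ((children v).map T).sum := by
    simpa using hcosts.flip.sum_map_le_sum_map (f := ((↑) : ℕ → ℕ∞)) (g := T) fun _ _ => And.right
  exact_mod_cast (add_le_add_right this _).trans hv

end TreeCost

theorem tree_cost_lfp_is_min_term_cost_general {V C : Type*} [Fintype V] [DecidableEq C]
    (cl : V → C) (nodeCost : V → ℕ) (children : V → List C)
    (hpos : ∀ v, 0 < nodeCost v)
    (T : C → ℕ∞)
    (hfix : ∀ c, T c = (Finset.univ.filter (fun v => cl v = c)).inf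
        fun v => (nodeCost v : ℕ∞) + ((children v).map T).sum)
    (hterm : ∀ c : C, ∃ n : ℕ, HasTermCost cl nodeCost children c n) :
    (∀ c n, HasTermCost cl nodeCost children c n → T c ≤ (n : ℕ∞)) ∧
    (∀ c, T c = sInf {x : ℕ∞ | ∃ n : ℕ, HasTermCost cl nodeCost children c n ∧ x = (n : ℕ∞)}) := by
  have lower : ∀ c n, HasTermCost cl nodeCost children c n → T c ≤ n :=
    fun _ _ => HasTermCost.le_of_le_treeCostStep fun c => (hfix c).le
  refine ⟨lower, fun c => le_antisymm (le_sInf ?_) ?_⟩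
  · rintro _ ⟨n, hn, rfl⟩
    exact lower c n hn
  · obtain ⟨n, hn⟩ := hterm c
    obtain ⟨m, hm, hmT⟩ := exists_hasTermCost_le_of_treeCostStep_le hpos (fun c => (hfix c).ge)
      (ne_top_of_le_ne_top (ENat.natCast_ne_top n) (lower c n hn))
    refine (sInf_le ?_).trans hmT
    exact ⟨m, hm, rfl⟩

/-- The tree-cost function `T`, the least fixed point of
`T c = min over e-nodes v in class c of (node_cost v + Σ_{k ∈ children v} T k)`,
is a lower bound on the tree cost of every term extractable from class `c`, and—provided
every class admits at least one finite term—`T c` equals the minimum tree cost over all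
terms extractable from `c`. -/
theorem tree_cost_lfp_is_min_term_cost {V C : Type*} [Fintype V] [DecidableEq C]
    (cl : V → C) (nodeCost : V → ℕ) (children : V → List C)
    (hpos : ∀ v, 0 < nodeCost v)
    (T : C → ℕ∞)
    (hfix : ∀ c, T c = (Finset.univ.filter (fun v => cl v = c)).inf
        fun v => (nodeCost v : ℕ∞) + ((children v).map T).sum)
    (hleast : ∀ S : C → ℕ∞,
      (∀ c, S c = (Finset.univ.filter (fun v => cl v = c)).inf
        fun v => (nodeCost v : ℕ∞) + ((children v).map S).sum) → T ≤ S)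
    (hterm : ∀ c : C, ∃ n : ℕ, HasTermCost cl nodeCost children c n) :
    (∀ c n, HasTermCost cl nodeCost children c n → T c ≤ (n : ℕ∞)) ∧
    (∀ c, T c = sInf {x : ℕ∞ | ∃ n : ℕ, HasTermCost cl nodeCost children c n ∧ x = (n : ℕ∞)}) :=
  tree_cost_lfp_is_min_term_cost_general cl nodeCost children hpos T hfix hterm
end

section
/- The feasible solutions of the ILP formulation (constraints 5b–5f,5i) are in cost-preserving bijection with valid extractions: constraints ensure each activated e-class selects exactly one e-node, children of selected e-nodes are activated, roots are activated, and the selection is acyclic; under this correspondence the ILP objective Σ c_i s_i equals the DAG cost of the extraction restricted to activated classes. -/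
/-- A feasible solution of the ILP formulation (constraints 5b–5f, 5i): 0/1 selection
variables `s` for e-nodes and activation variables `A` for e-classes with
`Σ_{i ∈ C_j} s_i = A_j`, `s_i ≤ A_j` for children classes `j` of `i`, `A_r = 1` for
roots, together with some integer level assignment `L` satisfying the big-M
cycle-elimination constraints with `M = |C| + 1`. -/
structure ILPSol {V C : Type*} [Fintype V] [Fintype C] [DecidableEq C]
    (cl : V → C) (children : V → Finset C) (roots : Finset C) where
  s : V → ℤ
  A : C → ℤ
  hs : ∀ v, s v = 0 ∨ s v = 1
  hA : ∀ c, A c = 0 ∨ A c = 1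
  hsum : ∀ c, ∑ v ∈ Finset.univ.filter (fun v => cl v = c), s v = A c
  hchild : ∀ v : V, ∀ c ∈ children v, s v ≤ A c
  hroot : ∀ r ∈ roots, A r = 1
  hlevel : ∃ L : C → ℤ, ∀ v : V, ∀ k ∈ children v, k ≠ cl v →
    L (cl v) - L k + ((Fintype.card C : ℤ) + 1) * (1 - s v) ≥ 1

/-- A valid extraction: a partial choice `sel` of one e-node per activated e-class
(`sel c = some v`), activating all roots, with each chosen e-node belonging to its class,
children classes of chosen e-nodes activated, and the induced class dependency graph
acyclic (witnessed by a rank function). -/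
structure Extraction {V C : Type*} [Fintype V] [Fintype C] [DecidableEq C]
    (cl : V → C) (children : V → Finset C) (roots : Finset C) where
  sel : C → Option V
  hroots : ∀ r ∈ roots, (sel r).isSome
  hcl : ∀ c v, sel c = some v → cl v = c
  hchildren : ∀ c v, sel c = some v → ∀ k ∈ children v, (sel k).isSome
  hacyc : ∃ r : C → ℕ, ∀ c v, sel c = some v → ∀ k ∈ children v, k ≠ c → r k < r c

/-! An ILP solution is determined by its 0/1 vector `s`, and `Σ_{i ∈ C_j} s_i = A_j ≤ 1` says
that a class contains at most one e-node with `s_i = 1`, and one exactly when it is activated;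
so `s` is the indicator of the e-nodes chosen by an extraction, and the objective `Σ c_i s_i`
is the cost of the chosen e-nodes. For a chosen e-node the big-M constraint reads
`L_{cl i} > L_k`, so the levels rank the classes acyclically. Conversely, an acyclicity rank
can be replaced by the number of classes of strictly smaller rank, which lies in `[0, |C|)`;
then for an unchosen e-node the term `M = |C| + 1` dominates every difference of levels. -/

attribute [ext] ILPSol Extraction

open Finset

theorem exists_nat_rank_lt_card {α β : Type*} [Fintype α] [Preorder β] (f : α → β) :
    ∃ r : α → ℕ, (∀ a b, f a < f b → r a < r b) ∧ ∀ a, r a < Fintype.card α := by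
  classical
  refine ⟨fun a => #{x | f x < f a}, fun a b hab => card_lt_card ?_, fun a => ?_⟩
  · refine ssubset_iff_of_subset (monotone_filter_right _ fun x _ hx => hx.trans hab) |>.mpr ?_
    exact ⟨a, by simp [hab]⟩
  · exact card_lt_univ_of_notMem (x := a) (by simp)

namespace ILPSol

variable {V C : Type*} [Fintype V] [Fintype C] [DecidableEq C]
  {cl : V → C} {children : V → Finset C} {roots : Finset C} (x : ILPSol cl children roots)

theorem card_selected (c : C) : (#{v | cl v = c ∧ x.s v = 1} : ℤ) = x.A c := by
  rw [← x.hsum c, ← filter_filter, ← sum_boole]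
  refine sum_congr rfl fun v _ => ?_
  rcases x.hs v with h | h <;> simp [h]

theorem eq_of_s_eq_one {v w : V} (hvw : cl v = cl w) (hv : x.s v = 1) (hw : x.s w = 1) :
    v = w := by
  have hle : #{u | cl u = cl w ∧ x.s u = 1} ≤ 1 := by
    have := x.card_selected (cl w)
    rcases x.hA (cl w) with h | h <;> omega
  exact card_le_one.mp hle v (by simp [hvw, hv]) w (by simp [hw])

theorem A_eq_one_iff (c : C) : x.A c = 1 ↔ ∃ v, cl v = c ∧ x.s v = 1 := by
  have hcard := x.card_selected c
  have hpos : 0 < #{v | cl v = c ∧ x.s v = 1} ↔ ∃ v, cl v = c ∧ x.s v = 1 := by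
    simp [Finset.card_pos, Finset.filter_nonempty_iff]
  rw [← hpos]
  rcases x.hA c with h | h <;> omega

theorem ext_s {y : ILPSol cl children roots} (h : x.s = y.s) : x = y := by
  refine ILPSol.ext h (funext fun c => ?_)
  rw [← x.hsum, ← y.hsum, h]

noncomputable def sel (c : C) : Option V :=
  open Classical in
  if h : ∃ v, cl v = c ∧ x.s v = 1 then some h.choose else none

theorem sel_eq_some_iff {c : C} {v : V} : x.sel c = some v ↔ cl v = c ∧ x.s v = 1 := by
  unfold sel
  split_ifs with h
  · refine ⟨?_, fun hv => ?_⟩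
    · rintro ⟨⟩
      exact h.choose_spec
    · rw [x.eq_of_s_eq_one (h.choose_spec.1.trans hv.1.symm) h.choose_spec.2 hv.2]
  · simpa using fun hv => h ⟨v, hv⟩

theorem isSome_sel_iff {c : C} : (x.sel c).isSome ↔ x.A c = 1 := by
  simp [Option.isSome_iff_exists, sel_eq_some_iff, A_eq_one_iff]

noncomputable def toExtraction : Extraction cl children roots where
  sel := x.sel
  hroots r hr := x.isSome_sel_iff.mpr (x.hroot r hr)
  hcl c v h := (x.sel_eq_some_iff.mp h).1
  hchildren c v h k hk := by
    have := x.hchild v k hk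
    rw [(x.sel_eq_some_iff.mp h).2] at this
    exact x.isSome_sel_iff.mpr (by rcases x.hA k with h | h <;> omega)
  hacyc := by
    obtain ⟨L, hL⟩ := x.hlevel
    obtain ⟨r, hr, -⟩ := exists_nat_rank_lt_card L
    refine ⟨r, fun c v h k hk hkc => hr k c ?_⟩
    obtain ⟨rfl, hs⟩ := x.sel_eq_some_iff.mp h
    have := hL v k hk hkc
    rw [hs] at this
    omega

end ILPSol

namespace Extraction

open Classical

variable {V C : Type*} [Fintype V] [Fintype C] [DecidableEq C]
  {cl : V → C} {children : V → Finset C} {roots : Finset C} (E : Extraction cl children roots)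

theorem sum_class_ite_sel_eq_some {M : Type*} [AddCommMonoid M] (f : V → M) (c : C) :
    ∑ v with cl v = c, (if E.sel (cl v) = some v then f v else 0) = ((E.sel c).map f).getD 0 := by
  rw [sum_congr rfl fun v hv => by rw [(mem_filter.mp hv).2]]
  rcases h : E.sel c with _ | v
  · simp
  · simp [sum_ite_eq, E.hcl c v h]

theorem sum_ite_sel_eq_some {M : Type*} [AddCommMonoid M] (f : V → M) :
    ∑ v, (if E.sel (cl v) = some v then f v else 0) = ∑ c, ((E.sel c).map f).getD 0 := by
  rw [← sum_fiberwise univ cl]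
  exact sum_congr rfl fun c _ => E.sum_class_ite_sel_eq_some f c

noncomputable def toILPSol : ILPSol cl children roots where
  s v := if E.sel (cl v) = some v then 1 else 0
  A c := if (E.sel c).isSome then 1 else 0
  hs v := by split_ifs <;> simp
  hA c := by split_ifs <;> simp
  hsum c := by
    rw [E.sum_class_ite_sel_eq_some (fun _ => (1 : ℤ)) c]
    cases E.sel c <;> rfl
  hchild v k hk := by
    split_ifs with hv hk' <;> try norm_num
    exact hk' (E.hchildren _ v hv k hk)
  hroot r hr := by simp [E.hroots r hr]
  hlevel := by
    obtain ⟨r, hr⟩ := E.hacyc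
    obtain ⟨r', hr', hbound⟩ := exists_nat_rank_lt_card r
    refine ⟨fun c => r' c, fun v k hk hkc => ?_⟩
    have := hbound k
    dsimp only
    split_ifs with hv
    · have := hr' k (cl v) (hr _ v hv k hk hkc)
      omega
    · omega

theorem sum_toILPSol_s_mul (cost : V → ℕ) :
    ∑ v, E.toILPSol.s v * (cost v : ℤ) = ∑ c, ((E.sel c).map fun v => (cost v : ℤ)).getD 0 := by
  simp only [toILPSol, ite_mul, one_mul, zero_mul]
  exact E.sum_ite_sel_eq_some _

theorem toILPSol_toExtraction : E.toILPSol.toExtraction = E := by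
  ext1
  funext c
  refine Option.ext fun v => ?_
  simp only [ILPSol.toExtraction, ILPSol.sel_eq_some_iff, toILPSol]
  constructor
  · rintro ⟨rfl, h⟩
    simpa using h
  · intro h
    simp [E.hcl c v h, h]

end Extraction

open Classical in
theorem ILPSol.toExtraction_toILPSol {V C : Type*} [Fintype V] [Fintype C] [DecidableEq C]
    {cl : V → C} {children : V → Finset C} {roots : Finset C} (x : ILPSol cl children roots) :
    x.toExtraction.toILPSol = x := by
  refine ILPSol.ext_s _ (funext fun v => ?_)
  change (if x.sel (cl v) = some v then 1 else 0) = x.s v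
  rcases x.hs v with h | h <;> simp [x.sel_eq_some_iff, h]

noncomputable def ILPSol.equivExtraction {V C : Type*} [Fintype V] [Fintype C] [DecidableEq C]
    {cl : V → C} {children : V → Finset C} {roots : Finset C} :
    ILPSol cl children roots ≃ Extraction cl children roots where
  toFun := ILPSol.toExtraction
  invFun := Extraction.toILPSol
  left_inv := ILPSol.toExtraction_toILPSol
  right_inv := Extraction.toILPSol_toExtraction

/-- The feasible ILP solutions are in cost-preserving bijection with
valid extractions: under the correspondence, the ILP objective `Σ c_i s_i` equals the
DAG cost of the extraction (sum of node costs of the e-nodes chosen for the activated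
classes). -/
theorem ilp_extraction_bijection {V C : Type*} [Fintype V] [Fintype C] [DecidableEq C]
    (cl : V → C) (children : V → Finset C) (roots : Finset C) (cost : V → ℕ) :
    ∃ e : ILPSol cl children roots ≃ Extraction cl children roots,
      ∀ x : ILPSol cl children roots,
        (∑ v : V, x.s v * (cost v : ℤ)) =
          ∑ c : C, (((e x).sel c).map (fun v => (cost v : ℤ))).getD 0 := by
  refine ⟨ILPSol.equivExtraction, fun x => ?_⟩
  conv_lhs => rw [← ILPSol.equivExtraction.symm_apply_apply x]
  exact (ILPSol.equivExtraction x).sum_toILPSol_s_mul cost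
end

section
/- The heuristic greedy solution is always feasible for the ILP with pruning constraints (5g) at any threshold θ ≥ 1, i.e., the warm start satisfies all constraints; consequently the optimal value of the pruned ILP is at most the heuristic DAG cost. -/
/-- A valid extraction with respect to the set `kept` of allowed e-nodes: one e-node is
selected per activated e-class, every selected e-node belongs to its class and to `kept`,
all roots are activated, children classes of selected e-nodes are activated, and the
induced dependency graph on e-classes is acyclic (witnessed by a rank function). -/
def Valid {V C : Type*} (cl : V → C) (children : V → Finset C) (roots : Finset C)
    (kept : Set V) (sel : C → V) (act : Finset C) : Prop :=
  roots ⊆ act ∧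
  (∀ c ∈ act, cl (sel c) = c ∧ sel c ∈ kept ∧ children (sel c) ⊆ act) ∧
  ∃ r : C → ℕ, ∀ c ∈ act, ∀ k ∈ children (sel c), k ≠ c → r k < r c

/-- DAG cost of an extraction: sum of node costs of the distinct selected e-nodes
(one per activated class). -/
def DagCost {V C : Type*} (cost : V → ℕ) (sel : C → V) (act : Finset C) : ℕ :=
  ∑ c ∈ act, cost (sel c)

/-- Optimal DAG cost over extractions using only e-nodes in `kept` (`⊤` if none exists). -/
noncomputable def OptCost {V C : Type*} (cl : V → C) (children : V → Finset C)
    (roots : Finset C) (cost : V → ℕ) (kept : Set V) : ℕ∞ :=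
  sInf {x : ℕ∞ | ∃ sel act, Valid cl children roots kept sel act ∧
    x = (DagCost cost sel act : ℕ∞)}

/-- E-nodes kept by pruning at threshold `θ`: those whose heuristic cost is at most
`θ` times the heuristic cost of every e-node of the same class (equivalently, at most
`θ` times the class minimum). -/
def keptSet {V C : Type*} (cl : V → C) (h : V → ℕ) (θ : ℚ) : Set V :=
  {v | ∀ w, cl w = cl v → (h v : ℚ) ≤ θ * (h w : ℚ)}

section Extraction

variable {V C : Type*} {cl : V → C} {children : V → Finset C} {roots : Finset C}

theorem Valid.of_sel_mem {kept kept' : Set V} {sel : C → V} {act : Finset C}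
    (hv : Valid cl children roots kept sel act) (hsel : ∀ c ∈ act, sel c ∈ kept') :
    Valid cl children roots kept' sel act := by
  obtain ⟨hroots, hnodes, hrank⟩ := hv
  exact ⟨hroots, fun c hc => ⟨(hnodes c hc).1, hsel c hc, (hnodes c hc).2.2⟩, hrank⟩

theorem optCost_le_dagCost {cost : V → ℕ} {kept : Set V} {sel : C → V} {act : Finset C}
    (hv : Valid cl children roots kept sel act) :
    OptCost cl children roots cost kept ≤ (DagCost cost sel act : ℕ∞) :=
  sInf_le ⟨sel, act, hv, rfl⟩

end Extraction

theorem mem_keptSet_of_forall_le {V C : Type*} {cl : V → C} {h : V → ℕ} {θ : ℚ}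
    (hθ : 1 ≤ θ) {v : V} (hv : ∀ w, cl w = cl v → h v ≤ h w) : v ∈ keptSet cl h θ := by
  intro w hw
  calc (h v : ℚ) ≤ h w := by exact_mod_cast hv w hw
    _ ≤ θ * h w := le_mul_of_one_le_left (Nat.cast_nonneg _) hθ

/-- The heuristic greedy solution — a valid extraction whose selected
e-node in each activated class has minimal heuristic cost in its class — is feasible for
the pruned problem at any threshold `θ ≥ 1` (the warm start satisfies all constraints,
including the pruning constraint 5g); consequently the optimal value of the pruned
problem is at most the heuristic DAG cost. -/
theorem warm_start_feasible_for_pruned_ilp {V C : Type*}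
    (cl : V → C) (children : V → Finset C) (roots : Finset C)
    (cost h : V → ℕ) (θ : ℚ) (hθ : 1 ≤ θ)
    (selG : C → V) (actG : Finset C)
    (hvalid : Valid cl children roots Set.univ selG actG)
    (hmin : ∀ c ∈ actG, ∀ w : V, cl w = cl (selG c) → h (selG c) ≤ h w) :
    Valid cl children roots (keptSet cl h θ) selG actG ∧
    OptCost cl children roots cost (keptSet cl h θ) ≤ (DagCost cost selG actG : ℕ∞) := by
  have hpruned : Valid cl children roots (keptSet cl h θ) selG actG :=
    hvalid.of_sel_mem fun c hc => mem_keptSet_of_forall_le hθ (hmin c hc)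
  exact ⟨hpruned, optCost_le_dagCost hpruned⟩
end

section
/- Redundancy elimination is sound: if two e-nodes v, w in the same e-class have identical multisets of children e-classes and node_cost(v) ≤ node_cost(w), then for every valid extraction selecting w there is a valid extraction selecting v instead with DAG cost less than or equal; hence deleting w does not change the optimal DAG cost. -/
/-
Replacing `w` by `v` is the postcomposition of the selection with the node map
`update id w v`, which preserves e-classes and children e-classes. So the activated
classes and the class dependency graph are unchanged (the same rank function still
witnesses acyclicity), while every summand of the DAG cost can only decrease. Since the
new extraction never selects `w`, the optimum without `w` is at most the unrestricted
optimum; the converse inequality holds because fewer allowed nodes means fewer extractions.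
-/

namespace Valid

variable {V C : Type*} {cl : V → C} {children : V → Finset C} {roots : Finset C}
  {kept kept' : Set V} {sel : C → V} {act : Finset C}

theorem mono (hkept : kept ⊆ kept') (h : Valid cl children roots kept sel act) :
    Valid cl children roots kept' sel act := by
  obtain ⟨hroots, hsel, hrank⟩ := h
  exact ⟨hroots, fun c hc => (hsel c hc).imp_right (And.imp_left (@hkept _)), hrank⟩

theorem comp {f : V → V} (hcl : ∀ u, cl (f u) = cl u)
    (hch : ∀ u, children (f u) = children u) (hkept : ∀ u ∈ kept, f u ∈ kept')
    (h : Valid cl children roots kept sel act) :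
    Valid cl children roots kept' (f ∘ sel) act := by
  obtain ⟨hroots, hsel, r, hrank⟩ := h
  refine ⟨hroots, fun c hc => ?_, r, fun c hc k hk => hrank c hc k ?_⟩
  · obtain ⟨hclc, hkeptc, hchc⟩ := hsel c hc
    exact ⟨(hcl _).trans hclc, hkept _ hkeptc, (hch _).trans_subset hchc⟩
  · simpa only [Function.comp_apply, hch] using hk

end Valid

theorem DagCost_comp_le {V C : Type*} {cost : V → ℕ} {f : V → V}
    (hcost : ∀ u, cost (f u) ≤ cost u) (sel : C → V) (act : Finset C) :
    DagCost cost (f ∘ sel) act ≤ DagCost cost sel act :=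
  Finset.sum_le_sum fun c _ => hcost (sel c)

section OptCost

variable {V C : Type*} {cl : V → C} {children : V → Finset C} {roots : Finset C}
  {cost : V → ℕ} {kept kept' : Set V}

theorem OptCost_anti (hkept : kept ⊆ kept') :
    OptCost cl children roots cost kept' ≤ OptCost cl children roots cost kept :=
  le_sInf fun _ ⟨sel, act, h, hx⟩ => sInf_le ⟨sel, act, h.mono hkept, hx⟩

theorem OptCost_le_of_comp {f : V → V} (hcl : ∀ u, cl (f u) = cl u)
    (hch : ∀ u, children (f u) = children u) (hkept : ∀ u ∈ kept, f u ∈ kept')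
    (hcost : ∀ u, cost (f u) ≤ cost u) :
    OptCost cl children roots cost kept' ≤ OptCost cl children roots cost kept := by
  refine le_sInf fun _ ⟨sel, act, h, hx⟩ => hx ▸ ?_
  calc OptCost cl children roots cost kept' ≤ DagCost cost (f ∘ sel) act :=
        sInf_le ⟨f ∘ sel, act, h.comp hcl hch hkept, rfl⟩
    _ ≤ DagCost cost sel act := by exact_mod_cast DagCost_comp_le hcost sel act

end OptCost

theorem redundancy_elimination_sound_general {V C : Type*} [DecidableEq V]
    (cl : V → C) (children : V → Finset C) (roots : Finset C)
    (cost : V → ℕ)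
    (v w : V) (hvw : v ≠ w)
    (hclass : cl v = cl w) (hch : children v = children w) (hcost : cost v ≤ cost w) :
    (∀ sel act, Valid cl children roots Set.univ sel act →
      Valid cl children roots Set.univ (fun c => if sel c = w then v else sel c) act ∧
      DagCost cost (fun c => if sel c = w then v else sel c) act ≤ DagCost cost sel act) ∧
    OptCost cl children roots cost {u | u ≠ w} =
      OptCost cl children roots cost Set.univ := by
  set f := Function.update id w v
  have hsel (sel : C → V) : (fun c => if sel c = w then v else sel c) = f ∘ sel :=
    funext fun c => (Function.update_apply id w v (sel c)).symm
  have hf_cl (u : V) : cl (f u) = cl u := by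
    by_cases hu : u = w <;> simp [f, hu, hclass]
  have hf_ch (u : V) : children (f u) = children u := by
    by_cases hu : u = w <;> simp [f, hu, hch]
  have hf_cost (u : V) : cost (f u) ≤ cost u := by
    by_cases hu : u = w <;> simp [f, hu, hcost]
  have hf_ne (u : V) : f u ∈ {u | u ≠ w} := by
    by_cases hu : u = w <;> simp [f, hu, hvw]
  refine ⟨fun sel act h => hsel sel ▸ ⟨h.comp hf_cl hf_ch fun _ _ => trivial,
    DagCost_comp_le hf_cost sel act⟩, le_antisymm ?_ (OptCost_anti (Set.subset_univ _))⟩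
  exact OptCost_le_of_comp hf_cl hf_ch (fun u _ => hf_ne u) hf_cost

/-- Redundancy elimination is sound: if two distinct e-nodes `v, w` of
the same e-class have identical children e-classes and `cost v ≤ cost w`, then every
valid extraction selecting `w` can be turned into a valid extraction selecting `v`
instead, with DAG cost less than or equal; hence deleting `w` does not change the
optimal DAG cost. -/
theorem redundancy_elimination_sound {V C : Type*} [DecidableEq V]
    (cl : V → C) (children : V → Finset C) (roots : Finset C)
    (cost : V → ℕ) (hpos : ∀ u, 0 < cost u)
    (v w : V) (hvw : v ≠ w)
    (hclass : cl v = cl w) (hch : children v = children w) (hcost : cost v ≤ cost w) :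
    (∀ sel act, Valid cl children roots Set.univ sel act →
      Valid cl children roots Set.univ (fun c => if sel c = w then v else sel c) act ∧
      DagCost cost (fun c => if sel c = w then v else sel c) act ≤ DagCost cost sel act) ∧
    OptCost cl children roots cost {u | u ≠ w} =
      OptCost cl children roots cost Set.univ :=
  redundancy_elimination_sound_general cl children roots cost v w hvw hclass hch hcost
end
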